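/- Let 𝒫 = (P_1, …, P_r) be an r-partition in ℝ^d. Then the set Φ(𝒫) is affinely dependent if and only if at least one of the sets P_i is affinely dependent or 𝒫 has a Tverberg direction, i.e., ⋂_{i=1}^r linaff(P_i) ≠ {0}. -/

import Mathlib

open Finset

namespace BMZ

noncomputable section

/-- Points of `ℝ^d`. -/
abbrev Pt (d : ℕ) := EuclideanSpace ℝ (Fin d)

/-- The space `ℝ^N`, `N = (d+1)(r-1)`, with `r = s+2`, presented with double
indices `(k, l) ∈ [d+1] × [r-1]`. -/
abbrev CSp (d s : ℕ) := EuclideanSpace ℝ (Fin (d + 1) × Fin (s + 1))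

/-- `w` is the vertex set of a regular `(r-1)`-dimensional simplex centered at the
origin (here `r = s+2`): the vertices are affinely independent, pairwise
equidistant with a positive common distance, and their barycenter is the origin. -/
def IsRegularSimplex {s : ℕ} (w : Fin (s + 2) → EuclideanSpace ℝ (Fin (s + 1))) : Prop :=
  AffineIndependent ℝ w ∧
    (∃ e : ℝ, 0 < e ∧ ∀ i j, i ≠ j → dist (w i) (w j) = e) ∧
    ∑ i, w i = 0

/-- `x⁺ = (x, 1) ∈ ℝ^{d+1}`. -/
def xplus {d : ℕ} (x : Pt d) : Fin (d + 1) → ℝ := Fin.snoc (x : Fin d → ℝ) 1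

/-- The `i`-th clone `φ_i(x) := x⁺ ⊗ w_i ∈ ℝ^N`. -/
def clone {d s : ℕ} (w : Fin (s + 2) → EuclideanSpace ℝ (Fin (s + 1)))
    (x : Pt d) (i : Fin (s + 2)) : CSp d s :=
  WithLp.toLp 2 (fun kl : Fin (d + 1) × Fin (s + 1) => xplus x kl.1 * w i kl.2)

/-- The Sarkaria–Onn transform `Φ(𝒫)` of an `r`-partition `𝒫 = (P_1, …, P_r)`:
for every point `p ∈ P_i` we put the `i`-th clone of `p` into `Φ(𝒫)`. -/
def Phi {d s : ℕ} (w : Fin (s + 2) → EuclideanSpace ℝ (Fin (s + 1)))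
    (P : Fin (s + 2) → Finset (Pt d)) : Set (CSp d s) :=
  ⋃ i, (fun p => clone w p i) '' (P i : Set (Pt d))

/-- `N = (d+1)(r-1)`, the number of points of a BMZ-collection other than `z`. -/
abbrev NN (d s : ℕ) : ℕ := (d + 1) * (s + 1)

/-- Indices of the points `c_1, …, c_{N+1}` of a BMZ-collection (the last point
is `z`). A BMZ-collection is an injective map `c : Idx d s → Pt d`, with the color
classes `C_1, …, C_{d+2}` consisting of consecutive points as given by `colorOf`. -/
abbrev Idx (d s : ℕ) := Fin (NN d s + 1)

/-- The color of the `i`-th point: each of the first `d+1` classes consists of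
`r-1` consecutive points, and the last class is the singleton `{z}`. -/
def colorOf (d s : ℕ) (i : Idx d s) : Fin (d + 2) :=
  if h : (i : ℕ) < NN d s then
    Fin.castSucc ⟨(i : ℕ) / (s + 1),
      Nat.div_lt_of_lt_mul (by rw [Nat.mul_comm]; exact h)⟩
  else Fin.last (d + 1)

/-- Maximal rainbow `r`-partitions `ℛ = (R_1, …, R_r) ∈ 𝔅(𝒞)` (with `z ∈ R_r`) are
in bijective correspondence with tuples of permutations `π_k` of `[r]`, one for
each of the first `d+1` colors: `π_k j` is the index of the class containing the
`j`-th point of `C_k` for `j ≤ r-1`, and `π_k r` is the index of the unique class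
containing no point of `C_k`. -/
abbrev PartEnc (d s : ℕ) := Fin (d + 1) → Equiv.Perm (Fin (s + 2))

/-- The class of the `i`-th point in the partition encoded by `σ`; the point `z`
lies in the last class. -/
def classOf {d s : ℕ} (σ : PartEnc d s) (i : Idx d s) : Fin (s + 2) :=
  if h : (i : ℕ) < NN d s then
    σ ⟨(i : ℕ) / (s + 1), Nat.div_lt_of_lt_mul (by rw [Nat.mul_comm]; exact h)⟩
      (Fin.castSucc ⟨(i : ℕ) % (s + 1), Nat.mod_lt _ (Nat.succ_pos s)⟩)
  else Fin.last (s + 1)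

variable {d s : ℕ}

open Classical in
/-- The `k`-th color class of the configuration `c`, as a finite set of points. -/
def colorClass (c : Idx d s → Pt d) (k : Fin (d + 2)) : Finset (Pt d) :=
  (Finset.univ.filter fun i => colorOf d s i = k).image c

open Classical in
/-- The class `R_i` of the partition encoded by `σ`, as a finite set of points. -/
def classSet (c : Idx d s → Pt d) (σ : PartEnc d s) (i : Fin (s + 2)) : Finset (Pt d) :=
  (Finset.univ.filter fun j => classOf σ j = i).image c

/-- `σ` encodes a Tverberg partition: the convex hulls of its classes have a
common point. -/
def IsTverberg (c : Idx d s → Pt d) (σ : PartEnc d s) : Prop :=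
  (⋂ i, convexHull ℝ (classSet c σ i : Set (Pt d))).Nonempty

/-- The clones of all the points of the configuration, w.r.t. the partition `σ`. -/
def allClones (w : Fin (s + 2) → EuclideanSpace ℝ (Fin (s + 1)))
    (c : Idx d s → Pt d) (σ : PartEnc d s) : Idx d s → CSp d s :=
  fun i => clone w (c i) (classOf σ i)

/-- The vertices of `F_ℛ = conv Φ(ℛ - z)`, ordered by the numbering of the points. -/
def rows (w : Fin (s + 2) → EuclideanSpace ℝ (Fin (s + 1)))
    (c : Idx d s → Pt d) (σ : PartEnc d s) : Fin (NN d s) → CSp d s :=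
  fun i => allClones w c σ i.castSucc

/-- `Φ(ℛ - a)`: the clones of all points except `a`. -/
def PhiMinus (w : Fin (s + 2) → EuclideanSpace ℝ (Fin (s + 1)))
    (c : Idx d s → Pt d) (σ : PartEnc d s) (a : Idx d s) : Set (CSp d s) :=
  allClones w c σ '' {i | i ≠ a}

/-- The simplex `F_ℛ = conv Φ(ℛ - z)`. -/
def Fface (w : Fin (s + 2) → EuclideanSpace ℝ (Fin (s + 1)))
    (c : Idx d s → Pt d) (σ : PartEnc d s) : Set (CSp d s) :=
  convexHull ℝ (Set.range (rows w c σ))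

/-- `𝒞` is in sufficiently general position: each `Φ(ℛ - z)` is affinely
independent, and `0 ∉ aff Φ(ℛ - a)` for all `ℛ ∈ 𝔅(𝒞)` and `a ∈ C`. -/
def SuffGenPos (w : Fin (s + 2) → EuclideanSpace ℝ (Fin (s + 1)))
    (c : Idx d s → Pt d) : Prop :=
  (∀ σ : PartEnc d s, AffineIndependent ℝ (rows w c σ)) ∧
  (∀ (σ : PartEnc d s) (a : Idx d s), (0 : CSp d s) ∉ affineSpan ℝ (PhiMinus w c σ a))

/-- A ridge `conv Φ(ℛ - z - a)`, `a ∈ C \ {z}`. -/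
def ridge (w : Fin (s + 2) → EuclideanSpace ℝ (Fin (s + 1)))
    (c : Idx d s → Pt d) (σ : PartEnc d s) (a : Fin (NN d s)) : Set (CSp d s) :=
  convexHull ℝ (rows w c σ '' {i | i ≠ a})

/-- `𝒞` is in almost general position: all ridges avoid the origin. -/
def AlmostGenPos (w : Fin (s + 2) → EuclideanSpace ℝ (Fin (s + 1)))
    (c : Idx d s → Pt d) : Prop :=
  ∀ (σ : PartEnc d s) (a : Fin (NN d s)), (0 : CSp d s) ∉ ridge w c σ a

/-- The ray emanating from `0` in the direction `u`. -/
def raySet (u : CSp d s) : Set (CSp d s) := {x | ∃ t : ℝ, 0 ≤ t ∧ x = t • u}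

/-- A ray emanating from `0` is generic for `𝒞` if it intersects no ridge. -/
def GenericRay (w : Fin (s + 2) → EuclideanSpace ℝ (Fin (s + 1)))
    (c : Idx d s → Pt d) (u : CSp d s) : Prop :=
  ∀ (σ : PartEnc d s) (a : Fin (NN d s)), ∀ x ∈ raySet u, x ∉ ridge w c σ a

/-- The combinatorial sign `csgn(ℛ) = ∏_k sgn(π_k)`. -/
def csgn (σ : PartEnc d s) : ℤ := ∏ k, (Equiv.Perm.sign (σ k) : ℤ)

/-- The sign of a real number, as an integer. -/
def sgnR (x : ℝ) : ℤ := if 0 < x then 1 else if x < 0 then -1 else 0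

/-- The geometric sign `gsgn(ℛ)`: the sign of the determinant of the `N × N`
matrix whose rows are the vertices of `F_ℛ`, ordered by the numbering of the
points of `C`. -/
def gsgn (w : Fin (s + 2) → EuclideanSpace ℝ (Fin (s + 1)))
    (c : Idx d s → Pt d) (σ : PartEnc d s) : ℤ :=
  sgnR (Matrix.det (Matrix.of fun i j : Fin (NN d s) =>
    rows w c σ i (finProdFinEquiv.symm j)))

/-- The sign `sgn(ℛ) = gsgn(ℛ) ⬝ csgn(ℛ)`. -/
def psgn (w : Fin (s + 2) → EuclideanSpace ℝ (Fin (s + 1)))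
    (c : Idx d s → Pt d) (σ : PartEnc d s) : ℤ :=
  gsgn w c σ * csgn σ

/-- `z* = φ_r(z)`. -/
def zstar (w : Fin (s + 2) → EuclideanSpace ℝ (Fin (s + 1)))
    (c : Idx d s → Pt d) : CSp d s :=
  clone w (c (Fin.last (NN d s))) (Fin.last (s + 1))

open Classical in
/-- The degree of `𝒞` measured along the ray from `0` in direction `u`:
`deg_ψ(𝒞) = Σ_{ℛ ∈ 𝔅(𝒞), ψ ∩ F_ℛ ≠ ∅} sgn(ℛ)`. -/
def degRay (w : Fin (s + 2) → EuclideanSpace ℝ (Fin (s + 1)))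
    (c : Idx d s → Pt d) (u : CSp d s) : ℤ :=
  ∑ σ : PartEnc d s, if (raySet u ∩ Fface w c σ).Nonempty then psgn w c σ else 0

/-- The degree `deg(𝒞)`, measured along the ray `ρ` emanating from `0` in the
direction `-z*`. -/
def degC (w : Fin (s + 2) → EuclideanSpace ℝ (Fin (s + 1)))
    (c : Idx d s → Pt d) : ℤ :=
  degRay w c (-(zstar w c))

end

end BMZ

/-!
Index `Φ(𝒫)` by the disjoint union of the parts, which is legitimate because `(i, p) ↦ p⁺ ⊗ w_i`
is injective, and let `β` be weights on it. Grouping by parts, `∑ β_p (p⁺ ⊗ w_i) = ∑_i v_i ⊗ w_i`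
with `v_i = ∑_{p ∈ P_i} β_p p⁺`. The only linear relations among the vertices of a simplex
centred at the origin are the constant ones, so this vanishes iff all the `v_i` coincide.
Write `v_i = (u_i, t_i)` with `u_i = ∑ β_p p` and `t_i = ∑ β_p`: the equal `t_i` add up to
`∑ β = 0`, so all vanish. Hence an affine relation on `Φ(𝒫)` is the same as an affine relation
on each part, all with a common value `u = u_i ∈ linaff(P_i)`. A nonzero `u` is a Tverberg
direction; if `u = 0`, some part carries a nontrivial affine relation.
-/

open BMZ

section AffineRelations

variable {k V ι : Type*} [Field k] [AddCommGroup V] [Module k V] [Fintype ι]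

theorem affineIndependent_iff_forall_sum_smul_eq_zero {p : ι → V} :
    AffineIndependent k p ↔ ∀ γ : ι → k, ∑ i, γ i = 0 → ∑ i, γ i • p i = 0 → γ = 0 := by
  rw [affineIndependent_iff_of_fintype]
  refine forall₂_congr fun γ hγ => ?_
  rw [univ.weightedVSub_eq_linear_combination hγ, funext_iff]
  rfl

theorem mem_vectorSpan_range_iff_exists_sum_smul {p : ι → V} {v : V} :
    v ∈ vectorSpan k (Set.range p) ↔ ∃ γ : ι → k, ∑ i, γ i = 0 ∧ ∑ i, γ i • p i = v := by
  classical
  rw [mem_vectorSpan_iff_eq_weightedVSub]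
  constructor
  · rintro ⟨t, γ, hγ, rfl⟩
    refine ⟨fun i => if i ∈ t then γ i else 0, by simpa [Finset.sum_ite_mem] using hγ, ?_⟩
    simp [ite_smul, Finset.sum_ite_mem, t.weightedVSub_eq_linear_combination hγ]
  · rintro ⟨γ, hγ, rfl⟩
    exact ⟨univ, γ, hγ, (univ.weightedVSub_eq_linear_combination hγ).symm⟩

variable [CharZero k] {w : ι → V}

theorem AffineIndependent.sum_smul_eq_zero_iff_forall_eq (hwi : AffineIndependent k w)
    (hw0 : ∑ i, w i = 0) (c : ι → k) : ∑ i, c i • w i = 0 ↔ ∀ i j, c i = c j := by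
  constructor
  · intro h i j
    have : Nonempty ι := ⟨i⟩
    have hcard : (Fintype.card ι : k) ≠ 0 := Nat.cast_ne_zero.2 Fintype.card_ne_zero
    -- compare `c` with the constant weights equal to its mean
    set m := (∑ i, c i) / Fintype.card ι
    have hc := hwi.eq_of_sum_eq_sum (s := univ) (w₁ := c) (w₂ := fun _ => m)
      (by simp [m, field]) (by simp [h, ← smul_sum, hw0])
    rw [hc i (mem_univ i), hc j (mem_univ j)]
  · intro h
    rcases isEmpty_or_nonempty ι with _ | ⟨⟨j⟩⟩
    · simp
    · rw [sum_congr rfl fun i _ => by rw [h i j], ← smul_sum, hw0, smul_zero]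

theorem AffineIndependent.ne_zero_of_sum_eq_zero [Nontrivial ι] (hwi : AffineIndependent k w)
    (hw0 : ∑ i, w i = 0) (i : ι) : w i ≠ 0 := by
  classical
  intro hi
  obtain ⟨j, hj⟩ := exists_ne i
  have := (hwi.sum_smul_eq_zero_iff_forall_eq hw0 (Pi.single i 1)).1 (by simp [hi]) i j
  simp [hj.symm] at this

end AffineRelations

section Clones

variable {d s : ℕ} {w : Fin (s + 2) → EuclideanSpace ℝ (Fin (s + 1))}

theorem xplus_injective : Function.Injective (xplus (d := d)) := fun _ _ h =>
  WithLp.ofLp_injective 2 (Fin.snoc_injective2.left _ h)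

theorem sum_smul_xplus {α : Type*} [Fintype α] (γ : α → ℝ) (q : α → Pt d) :
    ∑ a, γ a • xplus (q a) = Fin.snoc (WithLp.ofLp (∑ a, γ a • q a)) (∑ a, γ a) := by
  ext k
  induction k using Fin.lastCases <;> simp [xplus]

theorem clone_inj (hwi : AffineIndependent ℝ w) (hw0 : ∑ i, w i = 0) {x y : Pt d}
    {i j : Fin (s + 2)} : clone w x i = clone w y j ↔ i = j ∧ x = y := by
  refine ⟨fun h => ?_, by rintro ⟨rfl, rfl⟩; rfl⟩
  have hkl (k l) : xplus x k * w i l = xplus y k * w j l :=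
    congrFun (congrArg WithLp.ofLp h) (k, l)
  -- the last coordinate of `x⁺` is `1`, so the last row of `x⁺ ⊗ w_i` is `w_i`
  obtain rfl : i = j := hwi.injective <| WithLp.ofLp_injective 2 <| funext fun l => by
    simpa [xplus] using hkl (Fin.last d) l
  obtain ⟨l, hl⟩ : ∃ l, w i l ≠ 0 := by
    by_contra! h
    exact hwi.ne_zero_of_sum_eq_zero hw0 i (WithLp.ofLp_injective 2 (funext h))
  exact ⟨rfl, xplus_injective (funext fun k => mul_right_cancel₀ hl (hkl k l))⟩

def cloneFamily (w : Fin (s + 2) → EuclideanSpace ℝ (Fin (s + 1)))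
    (P : Fin (s + 2) → Finset (Pt d)) : (Σ i, (P i : Set (Pt d))) → CSp d s :=
  fun x => clone w x.2 x.1

variable {P : Fin (s + 2) → Finset (Pt d)}

theorem cloneFamily_injective (hwi : AffineIndependent ℝ w) (hw0 : ∑ i, w i = 0) :
    Function.Injective (cloneFamily w P) := by
  rintro ⟨i, x⟩ ⟨j, y⟩ h
  obtain ⟨rfl, hxy⟩ := (clone_inj hwi hw0).1 h
  exact congrArg (Sigma.mk i) (Subtype.ext hxy)

theorem range_cloneFamily : Set.range (cloneFamily w P) = Phi w P := by
  ext y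
  simp [cloneFamily, Phi, eq_comm]

theorem affineIndependent_phi_iff (hwi : AffineIndependent ℝ w) (hw0 : ∑ i, w i = 0) :
    AffineIndependent ℝ (fun x : Phi w P => (x : CSp d s)) ↔
      AffineIndependent ℝ (cloneFamily w P) := by
  rw [← range_cloneFamily]
  exact (affineIndependent_equiv (Equiv.ofInjective _ (cloneFamily_injective hwi hw0))).symm

theorem sum_smul_cloneFamily (β : (Σ i, (P i : Set (Pt d))) → ℝ) :
    ∑ x, β x • cloneFamily w P x =
      WithLp.toLp 2 fun kl => ∑ i, (∑ p, β ⟨i, p⟩ • xplus (p : Pt d)) kl.1 * w i kl.2 := by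
  ext kl
  simp [cloneFamily, clone, Fintype.sum_sigma, Finset.sum_mul, mul_assoc]

theorem sum_smul_cloneFamily_eq_zero_iff (hwi : AffineIndependent ℝ w) (hw0 : ∑ i, w i = 0)
    (β : (Σ i, (P i : Set (Pt d))) → ℝ) :
    ∑ x, β x • cloneFamily w P x = 0 ↔
      ∀ i j, ∑ p, β ⟨i, p⟩ • xplus (p : Pt d) = ∑ p, β ⟨j, p⟩ • xplus (p : Pt d) := by
  set v := fun i => ∑ p : (P i : Set (Pt d)), β ⟨i, p⟩ • xplus (p : Pt d)
  have hrows : ∑ x, β x • cloneFamily w P x = 0 ↔ ∀ k, ∑ i, v i k • w i = 0 := by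
    simp only [sum_smul_cloneFamily, WithLp.toLp_eq_zero, funext_iff, Prod.forall]
    refine forall_congr' fun k => ?_
    rw [← WithLp.ofLp_injective 2 |>.eq_iff, funext_iff]
    simp [v]
  simp only [hrows, hwi.sum_smul_eq_zero_iff_forall_eq hw0, funext_iff]
  exact forall_comm.trans (forall_congr' fun _ => forall_comm)

theorem sum_eq_zero_and_sum_smul_cloneFamily_eq_zero_iff (hwi : AffineIndependent ℝ w)
    (hw0 : ∑ i, w i = 0) (β : (Σ i, (P i : Set (Pt d))) → ℝ) :
    (∑ x, β x = 0 ∧ ∑ x, β x • cloneFamily w P x = 0) ↔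
      ∃ u : Pt d, ∀ i, ∑ p, β ⟨i, p⟩ = 0 ∧ ∑ p, β ⟨i, p⟩ • (p : Pt d) = u := by
  rw [sum_smul_cloneFamily_eq_zero_iff hwi hw0, Fintype.sum_sigma]
  simp only [sum_smul_xplus, Fin.snoc_inj]
  constructor
  · rintro ⟨hsum, heq⟩
    have hpart (i) : ∑ p : (P i : Set (Pt d)), β ⟨i, p⟩ = 0 := by
      rw [sum_congr rfl fun j _ => (heq j i).2, sum_const, card_univ, Fintype.card_fin,
        nsmul_eq_mul] at hsum
      exact (mul_eq_zero.1 hsum).resolve_left (by positivity)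
    exact ⟨_, fun i => ⟨hpart i, WithLp.ofLp_injective 2 (heq i 0).1⟩⟩
  · rintro ⟨u, hu⟩
    exact ⟨sum_eq_zero fun i _ => (hu i).1,
      fun i j => ⟨by rw [(hu i).2, (hu j).2], (hu i).1.trans (hu j).1.symm⟩⟩

theorem affineIndependent_cloneFamily_iff (hwi : AffineIndependent ℝ w) (hw0 : ∑ i, w i = 0) :
    AffineIndependent ℝ (cloneFamily w P) ↔
      (∀ i, AffineIndependent ℝ (fun x : (P i : Set (Pt d)) => (x : Pt d))) ∧
        ⋂ i, (vectorSpan ℝ (P i : Set (Pt d)) : Set (Pt d)) = {0} := by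
  have hspan (i) (u : Pt d) : u ∈ vectorSpan ℝ (P i : Set (Pt d)) ↔
      ∃ γ : ↥(P i : Set (Pt d)) → ℝ, ∑ p, γ p = 0 ∧ ∑ p, γ p • (p : Pt d) = u := by
    rw [← mem_vectorSpan_range_iff_exists_sum_smul, Subtype.range_coe]
  simp only [affineIndependent_iff_forall_sum_smul_eq_zero]
  constructor
  · intro hg
    refine ⟨fun i γ hγ₀ hγ₁ => ?_, ?_⟩
    · set β : (Σ j, (P j : Set (Pt d))) → ℝ :=
        fun x => Function.update (fun j (_ : (P j : Set (Pt d))) => (0 : ℝ)) i γ x.1 x.2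
      have hparts (j) : ∑ p, β ⟨j, p⟩ = 0 ∧ ∑ p, β ⟨j, p⟩ • (p : Pt d) = 0 := by
        rcases eq_or_ne j i with rfl | hj
        · simpa [β] using ⟨hγ₀, hγ₁⟩
        · simp [β, hj]
      obtain ⟨hβ₀, hβ₁⟩ :=
        (sum_eq_zero_and_sum_smul_cloneFamily_eq_zero_iff hwi hw0 β).2 ⟨0, hparts⟩
      funext p
      simpa [β] using congrFun (hg β hβ₀ hβ₁) ⟨i, p⟩
    · refine Set.eq_singleton_iff_unique_mem.2 ⟨Set.mem_iInter.2 fun i => zero_mem _, ?_⟩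
      intro u hu
      choose γ hγ using fun i => (hspan i u).1 (Set.mem_iInter.1 hu i)
      obtain ⟨hβ₀, hβ₁⟩ := (sum_eq_zero_and_sum_smul_cloneFamily_eq_zero_iff hwi hw0
        (fun x => γ x.1 x.2)).2 ⟨u, hγ⟩
      have hβ := hg _ hβ₀ hβ₁
      rw [← (hγ 0).2]
      simp [fun p => congrFun hβ ⟨0, p⟩]
  · rintro ⟨hP, hT⟩ β hβ₀ hβ₁
    obtain ⟨u, hu⟩ :=
      (sum_eq_zero_and_sum_smul_cloneFamily_eq_zero_iff hwi hw0 β).1 ⟨hβ₀, hβ₁⟩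
    have hu0 : u ∈ ⋂ i, (vectorSpan ℝ (P i : Set (Pt d)) : Set (Pt d)) :=
      Set.mem_iInter.2 fun i => (hspan i u).2 ⟨_, hu i⟩
    rw [hT, Set.mem_singleton_iff] at hu0
    funext ⟨i, p⟩
    exact congrFun (hP i _ (hu i).1 ((hu i).2.trans hu0)) p

end Clones

open BMZ in
theorem phi_affine_dependent_iff_general (d s : ℕ)
    (w : Fin (s + 2) → EuclideanSpace ℝ (Fin (s + 1))) (hw : IsRegularSimplex w)
    (P : Fin (s + 2) → Finset (Pt d)) :
    ¬ AffineIndependent ℝ (fun x : Phi w P => (x : CSp d s)) ↔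
      ((∃ i, ¬ AffineIndependent ℝ (fun x : (P i : Set (Pt d)) => (x : Pt d))) ∨
        (⋂ i, (vectorSpan ℝ (P i : Set (Pt d)) : Set (Pt d))) ≠ {0}) := by
  rw [affineIndependent_phi_iff hw.1 hw.2.2, affineIndependent_cloneFamily_iff hw.1 hw.2.2,
    not_and_or, not_forall]

open BMZ in
/-- Let `𝒫 = (P_1, …, P_r)` be an `r`-partition in `ℝ^d` (here `r = s+2 ≥ 2`).
Then `Φ(𝒫)` is affinely dependent iff at least one of the `P_i` is affinely
dependent or `𝒫` has a Tverberg direction, i.e. `⋂_i linaff(P_i) ≠ {0}`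
(`linaff = vectorSpan` is the translate of the affine hull through `0`). -/
theorem phi_affine_dependent_iff (d s : ℕ) (hd : 1 ≤ d)
    (w : Fin (s + 2) → EuclideanSpace ℝ (Fin (s + 1))) (hw : IsRegularSimplex w)
    (P : Fin (s + 2) → Finset (Pt d))
    (hP : Pairwise fun i i' => Disjoint (P i) (P i')) :
    ¬ AffineIndependent ℝ (fun x : Phi w P => (x : CSp d s)) ↔
      ((∃ i, ¬ AffineIndependent ℝ (fun x : (P i : Set (Pt d)) => (x : Pt d))) ∨
        (⋂ i, (vectorSpan ℝ (P i : Set (Pt d)) : Set (Pt d))) ≠ {0}) :=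
  phi_affine_dependent_iff_general d s w hw P
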